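/- arXiv:math/0612190 — 2 statements merged into one kernel-verified Lean document; each statement's English description precedes it below -/
import Mathlib

section
/- For every continuous function φ on [0,1], the sequence of integrals ∫₀¹ φ dμ_{α,k} (where μ_{α,k} has piecewise-constant density f_{α,k}(x) = 2^k α^{n(j)}(1-α)^{k-n(j)} on X_j^k) is a Cauchy sequence in ℝ. -/
open MeasureTheory Set

/-- Number of 1 digits in the binary expansion of `m`. -/
def binOnes (m : ℕ) : ℕ := (Nat.digits 2 m).count 1

/-- The piecewise-constant density of the approximating measure `μ_{α,k}`:
`f_{α,k}(x) = 2^k α^{n(j)} (1-α)^{k-n(j)}` on `X_j^k = [j/2^k, (j+1)/2^k)`. -/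
noncomputable def binDensity (α : ℝ) (k : ℕ) (x : ℝ) : ℝ :=
  2 ^ k * α ^ binOnes ⌊2 ^ k * x⌋₊ * (1 - α) ^ (k - binOnes ⌊2 ^ k * x⌋₊)

/-!
For `l ≥ k`, the measure `μ_{α,l}` gives the dyadic interval `X_j^k` the mass
`α^{n(j)} (1-α)^{k-n(j)}`, independently of `l`: the two halves `X_{2j}^{k+1}` and `X_{2j+1}^{k+1}`
carry the fractions `1-α` and `α` of the mass of `X_j^k`, since `n(2j) = n(j)` and
`n(2j+1) = n(j) + 1`. Hence for every `l ≥ k` the integral of `φ` against `μ_{α,l}` lies within the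
oscillation of `φ` at scale `2^{-k}` of one and the same Riemann sum `∑_j φ(j/2^k) μ_{α,k}(X_j^k)`,
and uniform continuity of `φ` on `[0,1]` makes that oscillation small.
-/

lemma binOnes_two_mul (j : ℕ) : binOnes (2 * j) = binOnes j := by
  rcases eq_or_ne j 0 with rfl | hj
  · rfl
  · simpa [binOnes] using
      congrArg (List.count 1) (Nat.digits_add 2 one_lt_two 0 j two_pos (.inr hj))

lemma binOnes_two_mul_add_one (j : ℕ) : binOnes (2 * j + 1) = binOnes j + 1 := by
  rw [binOnes, add_comm, Nat.digits_add 2 one_lt_two 1 j one_lt_two (.inl one_ne_zero)]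
  simp [binOnes]

lemma binOnes_le_of_lt_two_pow {k j : ℕ} (hj : j < 2 ^ k) : binOnes j ≤ k :=
  List.count_le_length.trans ((Nat.digits_length_le_iff one_lt_two j).mpr hj)

/-- The `μ_{α,l}`-mass of `dyad k j` for every `l ≥ k`, provided `j < 2 ^ k`. -/
def binWeight (α : ℝ) (k j : ℕ) : ℝ := α ^ binOnes j * (1 - α) ^ (k - binOnes j)

lemma binWeight_two_mul_add_binWeight_two_mul_add_one (α : ℝ) {k j : ℕ} (hj : j < 2 ^ k) :
    binWeight α (k + 1) (2 * j) + binWeight α (k + 1) (2 * j + 1) = binWeight α k j := by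
  have hjk := binOnes_le_of_lt_two_pow hj
  rw [binWeight, binWeight, binWeight, binOnes_two_mul, binOnes_two_mul_add_one,
    Nat.add_sub_add_right, Nat.sub_add_comm hjk, pow_succ, pow_succ]
  ring

/-- The paper's `X_j^k`. -/
def dyad (k j : ℕ) : Set ℝ := Ico (j / 2 ^ k) ((j + 1) / 2 ^ k)

lemma measurableSet_dyad (k j : ℕ) : MeasurableSet (dyad k j) := measurableSet_Ico

lemma volume_dyad_ne_top (k j : ℕ) : volume (dyad k j) ≠ ⊤ := by
  simp [dyad, Real.volume_Ico]

lemma mem_dyad_iff {k j : ℕ} {x : ℝ} :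
    x ∈ dyad k j ↔ (j : ℝ) ≤ 2 ^ k * x ∧ 2 ^ k * x < j + 1 := by
  rw [dyad, mem_Ico, div_le_iff₀' (by positivity), lt_div_iff₀' (by positivity)]

lemma floor_eq_of_mem_dyad {k j : ℕ} {x : ℝ} (hx : x ∈ dyad k j) :
    ⌊(2 : ℝ) ^ k * x⌋₊ = j :=
  (Nat.floor_eq_iff ((Nat.cast_nonneg j).trans (mem_dyad_iff.mp hx).1)).mpr (mem_dyad_iff.mp hx)

lemma mem_dyad_floor {k : ℕ} {x : ℝ} (hx : 0 ≤ x) : x ∈ dyad k ⌊(2 : ℝ) ^ k * x⌋₊ :=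
  mem_dyad_iff.mpr ⟨Nat.floor_le (by positivity), Nat.lt_floor_add_one _⟩

lemma dist_lt_of_mem_dyad {k j : ℕ} {x : ℝ} (hx : x ∈ dyad k j) :
    dist x (j / 2 ^ k) < (2 ^ k)⁻¹ := by
  obtain ⟨h1, h2⟩ := hx
  rw [Real.dist_eq, abs_of_nonneg (sub_nonneg.mpr h1)]
  rw [add_div, one_div] at h2
  linarith

lemma left_mem_dyad (k j : ℕ) : (j / 2 ^ k : ℝ) ∈ dyad k j :=
  left_mem_Ico.mpr (by gcongr; linarith)

lemma dyad_subset_Ico {k j : ℕ} (hj : j < 2 ^ k) : dyad k j ⊆ Ico 0 1 := by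
  refine Ico_subset_Ico (by positivity) ?_
  rw [div_le_one (by positivity)]
  exact_mod_cast hj

lemma biUnion_dyad (k : ℕ) : ⋃ j ∈ Finset.range (2 ^ k), dyad k j = Ico 0 1 := by
  refine Subset.antisymm (iUnion₂_subset fun j hj ↦ dyad_subset_Ico (Finset.mem_range.mp hj)) ?_
  rintro x ⟨hx0, hx1⟩
  refine mem_biUnion (Finset.mem_range.mpr ?_) (mem_dyad_floor hx0)
  rw [Nat.floor_lt (by positivity)]
  push_cast
  exact mul_lt_of_lt_one_right (by positivity) hx1

lemma pairwise_disjoint_dyad (k : ℕ) : Pairwise fun i j ↦ Disjoint (dyad k i) (dyad k j) :=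
  fun _ _ hij ↦ disjoint_left.mpr fun _ hi hj ↦
    hij ((floor_eq_of_mem_dyad hi).symm.trans (floor_eq_of_mem_dyad hj))

lemma dyad_eq_union (k j : ℕ) : dyad k j = dyad (k + 1) (2 * j) ∪ dyad (k + 1) (2 * j + 1) := by
  have h₁ : ((2 * j : ℕ) : ℝ) / 2 ^ (k + 1) = j / 2 ^ k := by
    push_cast; rw [pow_succ]; field_simp
  have h₂ : ((2 * j : ℕ) + 1 : ℝ) = (2 * j + 1 : ℕ) := by push_cast; ring
  have h₃ : ((2 * j + 1 : ℕ) + 1 : ℝ) / 2 ^ (k + 1) = (j + 1) / 2 ^ k := by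
    push_cast; rw [pow_succ]; field_simp; ring
  rw [dyad, dyad, dyad, h₁, h₂, h₃, Ico_union_Ico_eq_Ico]
  · rw [← h₁]; gcongr; simp
  · rw [← h₃]; gcongr; simp

lemma binDensity_eq_of_mem_dyad (α : ℝ) {k j : ℕ} {x : ℝ} (hx : x ∈ dyad k j) :
    binDensity α k x = 2 ^ k * binWeight α k j := by
  rw [binDensity, floor_eq_of_mem_dyad hx, binWeight, mul_assoc]

lemma measurable_binDensity (α : ℝ) (k : ℕ) : Measurable (binDensity α k) :=
  (measurable_from_nat (f := fun n ↦ 2 ^ k * α ^ binOnes n * (1 - α) ^ (k - binOnes n))).comp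
    (Nat.measurable_floor.comp (measurable_id.const_mul _))

section UnitInterval

variable {α : ℝ} (h0 : 0 ≤ α) (h1 : α ≤ 1)
include h0 h1

lemma binDensity_nonneg (k : ℕ) (x : ℝ) : 0 ≤ binDensity α k x := by
  have : 0 ≤ 1 - α := sub_nonneg.mpr h1
  unfold binDensity
  positivity

lemma binDensity_le (k : ℕ) (x : ℝ) : binDensity α k x ≤ 2 ^ k := by
  unfold binDensity
  have ha := pow_le_one₀ (n := binOnes ⌊(2 : ℝ) ^ k * x⌋₊) h0 h1
  have hb := pow_le_one₀ (n := k - binOnes ⌊(2 : ℝ) ^ k * x⌋₊) (sub_nonneg.mpr h1) (by linarith)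
  calc _ ≤ (2 : ℝ) ^ k * 1 * 1 := by gcongr
    _ = 2 ^ k := by ring

lemma integrableOn_binDensity (k : ℕ) {s : Set ℝ} (hs : volume s ≠ ⊤) :
    IntegrableOn (binDensity α k) s :=
  Measure.integrableOn_of_bounded hs (measurable_binDensity α k).aestronglyMeasurable
    (ae_of_all _ fun x ↦ by
      rw [Real.norm_eq_abs, abs_of_nonneg (binDensity_nonneg h0 h1 k x)]
      exact binDensity_le h0 h1 k x)

lemma setIntegral_binDensity_dyad {k j l : ℕ} (hj : j < 2 ^ k) (hkl : k ≤ l) :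
    ∫ x in dyad k j, binDensity α l x = binWeight α k j := by
  obtain ⟨d, rfl⟩ := Nat.exists_eq_add_of_le hkl
  induction d generalizing k j with
  | zero =>
    rw [Nat.add_zero, setIntegral_congr_fun (measurableSet_dyad k j)
      fun x hx ↦ binDensity_eq_of_mem_dyad α hx, setIntegral_const, smul_eq_mul,
      measureReal_def, dyad, Real.volume_Ico,
      ENNReal.toReal_ofReal (sub_nonneg.mpr (by gcongr; linarith))]
    field_simp
    ring
  | succ d ih =>
    have hint : ∀ i, IntegrableOn (binDensity α (k + (d + 1))) (dyad (k + 1) i) :=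
      fun i ↦ integrableOn_binDensity h0 h1 _ (volume_dyad_ne_top _ _)
    rw [dyad_eq_union, setIntegral_union (pairwise_disjoint_dyad _ (by omega))
      (measurableSet_dyad _ _) (hint _) (hint _), ← add_assoc, add_right_comm,
      ih (by omega) (by omega), ih (by omega) (by omega),
      binWeight_two_mul_add_binWeight_two_mul_add_one α hj]

lemma integral_binDensity_Ico (l : ℕ) : ∫ x in Ico 0 1, binDensity α l x = 1 := by
  simpa [dyad, binWeight, binOnes] using
    setIntegral_binDensity_dyad h0 h1 (k := 0) (j := 0) one_pos l.zero_le

end UnitInterval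

lemma abs_setIntegral_mul_sub_const_mul_le {X : Type*} [MeasurableSpace X] {μ : Measure X}
    {s : Set X} {φ f : X → ℝ} {c ε : ℝ} (hs : MeasurableSet s) (hf : IntegrableOn f s μ)
    (hφf : IntegrableOn (fun x ↦ φ x * f x) s μ) (hf0 : ∀ x ∈ s, 0 ≤ f x)
    (hφ : ∀ x ∈ s, |φ x - c| ≤ ε) :
    |(∫ x in s, φ x * f x ∂μ) - c * ∫ x in s, f x ∂μ| ≤ ε * ∫ x in s, f x ∂μ := by
  rw [← integral_const_mul, ← integral_sub hφf (hf.const_mul c), ← integral_const_mul]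
  refine abs_integral_le_integral_abs.trans
    (setIntegral_mono_on (hφf.sub (hf.const_mul c)).abs (hf.const_mul ε) hs fun x hx ↦ ?_)
  rw [← sub_mul, abs_mul, abs_of_nonneg (hf0 x hx)]
  exact mul_le_mul_of_nonneg_right (hφ x hx) (hf0 x hx)

lemma dist_integral_mul_binDensity_sum_le {α : ℝ} (h0 : 0 ≤ α) (h1 : α ≤ 1) {φ : ℝ → ℝ}
    (hφ : ContinuousOn φ (Icc 0 1)) {ε : ℝ} {k l : ℕ} (hkl : k ≤ l)
    (hmod : ∀ x ∈ Icc (0 : ℝ) 1, ∀ y ∈ Icc (0 : ℝ) 1,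
      dist x y < (2 ^ k)⁻¹ → dist (φ x) (φ y) ≤ ε) :
    dist (∫ x in Ico 0 1, φ x * binDensity α l x)
      (∑ j ∈ Finset.range (2 ^ k), φ (j / 2 ^ k) * binWeight α k j) ≤ ε := by
  have hf : IntegrableOn (binDensity α l) (Ico 0 1) :=
    integrableOn_binDensity h0 h1 l (by simp [Real.volume_Ico])
  have hφf : IntegrableOn (fun x ↦ φ x * binDensity α l x) (Ico 0 1) :=
    ((integrableOn_binDensity h0 h1 l (by simp [Real.volume_Icc])).continuousOn_mul hφ
      isCompact_Icc).mono_set Ico_subset_Icc_self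
  have hD : ∀ j ∈ Finset.range (2 ^ k), MeasurableSet (dyad k j) :=
    fun j _ ↦ measurableSet_dyad k j
  have hdisj := (pairwise_disjoint_dyad k).set_pairwise (Finset.range (2 ^ k) : Set ℕ)
  have hsub : ∀ j ∈ Finset.range (2 ^ k), dyad k j ⊆ Ico 0 1 :=
    fun j hj ↦ dyad_subset_Ico (Finset.mem_range.mp hj)
  rw [Real.dist_eq, ← biUnion_dyad k,
    integral_biUnion_finset _ hD hdisj fun j hj ↦ hφf.mono_set (hsub j hj),
    ← Finset.sum_sub_distrib]
  calc _ ≤ ∑ j ∈ Finset.range (2 ^ k),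
        |(∫ x in dyad k j, φ x * binDensity α l x) - φ (j / 2 ^ k) * binWeight α k j| :=
        Finset.abs_sum_le_sum_abs _ _
    _ ≤ ∑ j ∈ Finset.range (2 ^ k), ε * ∫ x in dyad k j, binDensity α l x := by
        refine Finset.sum_le_sum fun j hj ↦ ?_
        have hjk := Finset.mem_range.mp hj
        rw [← setIntegral_binDensity_dyad h0 h1 hjk hkl]
        refine abs_setIntegral_mul_sub_const_mul_le (hD j hj) (hf.mono_set (hsub j hj))
          (hφf.mono_set (hsub j hj)) (fun x _ ↦ binDensity_nonneg h0 h1 l x) fun x hx ↦ ?_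
        exact hmod x (Ico_subset_Icc_self (hsub j hj hx)) _
          (Ico_subset_Icc_self (dyad_subset_Ico hjk (left_mem_dyad k j))) (dist_lt_of_mem_dyad hx)
    _ = ε := by
        rw [← Finset.mul_sum,
          ← integral_biUnion_finset _ hD hdisj fun j hj ↦ hf.mono_set (hsub j hj),
          biUnion_dyad, integral_binDensity_Ico h0 h1, mul_one]

theorem binomial_integrals_cauchy (α : ℝ) (hα0 : 0 < α) (hα1 : α < 1)
    (φ : ℝ → ℝ) (hφ : ContinuousOn φ (Icc 0 1)) :
    CauchySeq (fun k : ℕ => ∫ x in Ico (0 : ℝ) 1, φ x * binDensity α k x) := by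
  refine Metric.cauchySeq_iff'.mpr fun ε hε ↦ ?_
  obtain ⟨δ, hδ, hφδ⟩ := Metric.uniformContinuousOn_iff.mp
    (isCompact_Icc.uniformContinuousOn_of_continuous hφ) (ε / 3) (by positivity)
  obtain ⟨N, hN⟩ := exists_pow_lt_of_lt_one hδ (by norm_num : (2 : ℝ)⁻¹ < 1)
  have hmod : ∀ x ∈ Icc (0 : ℝ) 1, ∀ y ∈ Icc (0 : ℝ) 1,
      dist x y < (2 ^ N)⁻¹ → dist (φ x) (φ y) ≤ ε / 3 :=
    fun x hx y hy hxy ↦ (hφδ x hx y hy (hxy.trans (by rwa [← inv_pow]))).le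
  refine ⟨N, fun l hl ↦ (dist_triangle_right _ _
    (∑ j ∈ Finset.range (2 ^ N), φ (j / 2 ^ N) * binWeight α N j)).trans_lt ?_⟩
  linarith [dist_integral_mul_binDensity_sum_le hα0.le hα1.le hφ hl hmod,
    dist_integral_mul_binDensity_sum_le hα0.le hα1.le hφ le_rfl hmod]
end

section
/- For every natural number s ≥ 1, the moments M_s = ∫₀¹ x^s dμ_α satisfy the recursion M_s = (α/(2^s − 1)) · Σ_{q=1}^{s} C(s,q) M_{s−q}, where M_0 = 1. -/
/-!
Test the self-similarity relation against `f x = x ^ s`. Since `(x/2 + 1/2)^s = (1 + x)^s / 2^s`,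
the binomial theorem gives `M_s = (1 - α) M_s / 2^s + α (M_s + S) / 2^s` with
`S = ∑_{q=1}^s C(s,q) M_{s-q}`; the two copies of `M_s` on the right combine to `M_s / 2^s`, and
solving for `M_s` gives the recursion. All moments exist because `μ` is a finite measure carried by
the compact set `[0, 1]`.
-/

open MeasureTheory Set

theorem one_add_pow_eq_pow_add_sum_Icc {R : Type*} [CommSemiring R] (x : R) (s : ℕ) :
    (1 + x) ^ s = x ^ s + ∑ q ∈ Finset.Icc 1 s, (s.choose q : R) * x ^ (s - q) := by
  rw [add_pow, Finset.sum_range_succ', ← Finset.Ico_add_one_right_eq_Icc, Finset.sum_Ico_eq_sum_range]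
  simp only [one_pow, one_mul, Nat.choose_zero_right, Nat.cast_one, mul_one, Nat.sub_zero,
    Nat.add_sub_cancel]
  rw [add_comm]
  congr 1
  exact Finset.sum_congr rfl fun k _ => by rw [add_comm 1 k, mul_comm]

theorem Continuous.integrable_of_ae_mem_isCompact {X E : Type*} [MeasurableSpace X]
    [TopologicalSpace X] [T2Space X] [OpensMeasurableSpace X] [NormedAddCommGroup E]
    {μ : Measure X} [IsFiniteMeasureOnCompacts μ] {f : X → E} {K : Set X}
    (hf : Continuous f) (hK : IsCompact K) (hμK : ∀ᵐ x ∂μ, x ∈ K) : Integrable f μ := by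
  simpa [IntegrableOn, Measure.restrict_eq_self_of_ae_mem hμK] using
    hf.continuousOn.integrableOn_compact (μ := μ) hK

section Moments

variable {μ : Measure ℝ}

theorem integral_div_two_pow (s : ℕ) :
    ∫ x, (x / 2) ^ s ∂μ = (∫ x, x ^ s ∂μ) / 2 ^ s := by
  simp_rw [div_pow]
  exact integral_div _ _

theorem integral_div_two_add_half_pow (hint : ∀ n : ℕ, Integrable (fun x : ℝ => x ^ n) μ)
    (s : ℕ) :
    ∫ x, (x / 2 + 1 / 2) ^ s ∂μ =
      (∫ x, x ^ s ∂μ + ∑ q ∈ Finset.Icc 1 s, (s.choose q : ℝ) * ∫ x, x ^ (s - q) ∂μ) / 2 ^ s := by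
  have hexpand : ∀ x : ℝ, (x / 2 + 1 / 2) ^ s =
      (x ^ s + ∑ q ∈ Finset.Icc 1 s, (s.choose q : ℝ) * x ^ (s - q)) / 2 ^ s := fun x => by
    rw [← one_add_pow_eq_pow_add_sum_Icc, ← div_pow]
    ring_nf
  simp_rw [hexpand]
  rw [integral_div, integral_add (hint s) (integrable_finsetSum _ fun q _ => (hint _).const_mul _),
    integral_finsetSum _ fun q _ => (hint _).const_mul _]
  simp_rw [integral_const_mul]

end Moments

theorem binomialMeasure_moment_recursion_general (α : ℝ)
    (μ : Measure ℝ) (hprob : IsProbabilityMeasure μ) (hsupp : μ (Icc (0 : ℝ) 1)ᶜ = 0)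
    (hbal : ∀ f : ℝ → ℝ, Continuous f →
      ∫ x, f x ∂μ = (1 - α) * ∫ x, f (x / 2) ∂μ + α * ∫ x, f (x / 2 + 1 / 2) ∂μ)
    (M : ℕ → ℝ) (hM : ∀ s : ℕ, M s = ∫ x, x ^ s ∂μ) :
    ∀ s : ℕ, 1 ≤ s →
      M s = α / (2 ^ s - 1) * ∑ q ∈ Finset.Icc 1 s, (s.choose q : ℝ) * M (s - q) := by
  intro s hs
  have hint : ∀ n : ℕ, Integrable (fun x : ℝ => x ^ n) μ := fun n =>
    (continuous_pow n).integrable_of_ae_mem_isCompact isCompact_Icc (mem_ae_iff.mpr hsupp)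
  have key := hbal _ (continuous_pow s)
  rw [integral_div_two_pow, integral_div_two_add_half_pow hint] at key
  simp_rw [← hM] at key
  have h2s : (1 : ℝ) < 2 ^ s := one_lt_pow₀ one_lt_two (by omega)
  rw [div_mul_eq_mul_div, eq_div_iff (by linarith)]
  field_simp at key
  linarith

theorem binomialMeasure_moment_recursion (α : ℝ) (hα0 : 0 < α) (hα1 : α < 1)
    (μ : Measure ℝ) (hprob : IsProbabilityMeasure μ) (hsupp : μ (Icc (0 : ℝ) 1)ᶜ = 0)
    (hbal : ∀ f : ℝ → ℝ, Continuous f →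
      ∫ x, f x ∂μ = (1 - α) * ∫ x, f (x / 2) ∂μ + α * ∫ x, f (x / 2 + 1 / 2) ∂μ)
    (M : ℕ → ℝ) (hM : ∀ s : ℕ, M s = ∫ x, x ^ s ∂μ) :
    ∀ s : ℕ, 1 ≤ s →
      M s = α / (2 ^ s - 1) * ∑ q ∈ Finset.Icc 1 s, (s.choose q : ℝ) * M (s - q) :=
  binomialMeasure_moment_recursion_general α μ hprob hsupp hbal M hM
end
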